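/- Let G be a flow graph with spanning tree T. For any vertex u, if two vertices x, y both lie in loop(u), then x and y lie in the same strongly connected component of the subgraph of G induced by the descendants of u in T; consequently loop(u) induces a strongly connected subgraph of G, and it is the unique maximal set of descendants of u containing u that does so. -/

import Mathlib

universe u

variable {V : Type u}

attribute [local instance] Classical.propDecidable

/-- A flow graph: a directed graph with arc relation `A` and start vertex `s`. -/
structure FlowGraph (V : Type u) where
  A : V → V → Prop
  s : V

namespace FlowGraph

/-- `p` is a (directed) path from `a` to `b`: a nonempty list of vertices starting at `a`,
ending at `b`, with consecutive vertices joined by arcs. -/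
def IsPath (G : FlowGraph V) (p : List V) (a b : V) : Prop :=
  p ≠ [] ∧ p.head? = some a ∧ p.getLast? = some b ∧ p.Chain' G.A

def Reach (G : FlowGraph V) (a b : V) : Prop := ∃ p, G.IsPath p a b

/-- `u` dominates `v`: every path from the start vertex `s` to `v` contains `u`. -/
def Dom (G : FlowGraph V) (u v : V) : Prop :=
  ∀ p, G.IsPath p G.s v → u ∈ p

/-- Acyclic: no cycle of more than one vertex, i.e. no two distinct mutually reachable
vertices. -/
def Acyclic (G : FlowGraph V) : Prop :=
  ∀ a b, a ≠ b → ¬ (G.Reach a b ∧ G.Reach b a)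

/-- A spanning tree of `G` rooted at `s`, given by a parent function: every non-root
vertex has a tree arc from its parent, and the parent chain of every vertex reaches `s`. -/
structure SpanningTree (G : FlowGraph V) where
  parent : V → V
  parent_arc : ∀ v, v ≠ G.s → G.A (parent v) v
  parent_root : parent G.s = G.s
  root_reach : ∀ v, Relation.ReflTransGen (fun a b => parent a = b) v G.s

/-- `u` is an ancestor of `v` in the tree `T` (reflexively). -/
def Anc {G : FlowGraph V} (T : SpanningTree G) (u v : V) : Prop :=
  Relation.ReflTransGen (fun a b => T.parent a = b) v u

/-- Replace occurrences of `v` by `x`. -/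
noncomputable def repl (v x a : V) : V := if a = v then x else a

/-- Contraction of vertex `v` into vertex `x`: every arc end equal to `v` is replaced by `x`. -/
noncomputable def contract (G : FlowGraph V) (v x : V) : FlowGraph V where
  A a b := ∃ a' b', G.A a' b' ∧ a = repl v x a' ∧ b = repl v x b'
  s := G.s

/-- `x ∈ loop(u)`: `x` is a descendant of `u` in `T` with a path from `x` to `u` in `G`
containing only descendants of `u` in `T`. -/
def InLoop (G : FlowGraph V) (T : SpanningTree G) (u x : V) : Prop :=
  Anc T u x ∧ ∃ p, G.IsPath p x u ∧ ∀ y ∈ p, Anc T u y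

/-- `d` is an immediate-dominator function for `G`: for each `v ≠ s`, `d v ≠ v` is a
dominator of `v` and every dominator of `v` other than `v` itself dominates `d v`. -/
def IsIdom (G : FlowGraph V) (d : V → V) : Prop :=
  ∀ v, v ≠ G.s → d v ≠ v ∧ G.Dom (d v) v ∧
    ∀ u, G.Dom u v → u ≠ v → G.Dom u (d v)

end FlowGraph

/-
Loop membership propagates along the relevant paths. Every vertex on a path from `x ∈ loop(u)`
to `u` through descendants of `u` is itself in `loop(u)`, using the rest of that path. Every
vertex `z` on the tree path from `u` down to `y ∈ loop(u)` is in `loop(u)` too: from `z` go down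
the tree to `y`, then back to `u`. Gluing the path from `x` to `u` and the tree path from `u` to
`y` therefore gives a path from `x` to `y` inside `loop(u)`. Maximality is immediate: in a
strongly connected set `S` of descendants of `u` with `u ∈ S`, every vertex has a path to `u`
inside `S`.
-/

namespace FlowGraph

variable {G : FlowGraph V}

theorem isPath_singleton (a : V) : G.IsPath [a] a a :=
  ⟨List.cons_ne_nil _ _, rfl, rfl, List.isChain_singleton _⟩

theorem IsPath.cons {p : List V} {a b c : V} (hp : G.IsPath p a b) (hca : G.A c a) :
    G.IsPath (c :: p) c b := by
  obtain ⟨-, hpa, hpb, hpA⟩ := hp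
  obtain ⟨t, rfl⟩ := List.head?_eq_some_iff.1 hpa
  exact ⟨List.cons_ne_nil _ _, rfl, by rwa [List.getLast?_cons_cons],
    List.isChain_cons_cons.2 ⟨hca, hpA⟩⟩

theorem IsPath.append {p q : List V} {a b c : V} (hp : G.IsPath p a b) (hq : G.IsPath q b c) :
    G.IsPath (p ++ q.tail) a c := by
  obtain ⟨hp0, hpa, hpb, hpA⟩ := hp
  obtain ⟨-, hqb, hqc, hqA⟩ := hq
  obtain ⟨t, rfl⟩ := List.head?_eq_some_iff.1 hqb
  refine ⟨List.append_ne_nil_of_left_ne_nil hp0 _, by simp [List.head?_append, hpa], ?_, ?_⟩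
  · rw [List.getLast?_cons] at hqc
    cases ht : t.getLast? <;> simp_all [List.getLast?_append]
  · refine List.isChain_append.2 ⟨hpA, hqA.tail, ?_⟩
    intro x hx y hy
    obtain rfl : x = b := by simpa [hpb] using hx.symm
    exact (List.isChain_cons.1 hqA).1 y hy

theorem IsPath.exists_suffix_of_mem {p : List V} {a b z : V} (hp : G.IsPath p a b)
    (hz : z ∈ p) : ∃ q, G.IsPath q z b ∧ q <:+ p := by
  obtain ⟨s, t, rfl⟩ := List.mem_iff_append.1 hz
  have hsuf : z :: t <:+ s ++ z :: t := List.suffix_append _ _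
  refine ⟨z :: t, ⟨List.cons_ne_nil _ _, rfl, ?_, hp.2.2.2.suffix hsuf⟩, hsuf⟩
  simpa [List.getLast?_append] using hp.2.2.1

theorem Anc.trans {T : SpanningTree G} {a b c : V} (hab : Anc T a b) (hbc : Anc T b c) :
    Anc T a c :=
  Relation.ReflTransGen.trans hbc hab

theorem Anc.exists_isPath {T : SpanningTree G} {u y : V} (h : Anc T u y) :
    ∃ p, G.IsPath p u y ∧ ∀ z ∈ p, Anc T u z ∧ Anc T z y := by
  induction h with
  | refl =>
    refine ⟨[y], isPath_singleton y, fun z hz => ?_⟩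
    obtain rfl := List.mem_singleton.1 hz
    exact ⟨.refl, .refl⟩
  | @tail b c hyb hbc ih =>
    obtain ⟨p, hp, hpm⟩ := ih
    by_cases hb : b = G.s
    · obtain rfl : c = b := by rw [← hbc, hb, T.parent_root]
      exact ⟨p, hp, hpm⟩
    · refine ⟨c :: p, hp.cons (hbc ▸ T.parent_arc b hb), fun z hz => ?_⟩
      rcases List.mem_cons.1 hz with rfl | hz
      · exact ⟨.refl, hyb.tail hbc⟩
      · exact ⟨(hpm z hz).1.tail hbc, (hpm z hz).2⟩

variable {T : SpanningTree G} {u : V}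

theorem inLoop_of_mem_isPath {p : List V} {x z : V} (hp : G.IsPath p x u)
    (hpu : ∀ y ∈ p, Anc T u y) (hz : z ∈ p) : InLoop G T u z := by
  obtain ⟨q, hq, hqp⟩ := hp.exists_suffix_of_mem hz
  exact ⟨hpu z hz, q, hq, fun y hy => hpu y (hqp.subset hy)⟩

theorem InLoop.of_anc {y z : V} (hy : InLoop G T u y) (huz : Anc T u z) (hzy : Anc T z y) :
    InLoop G T u z := by
  obtain ⟨-, p, hp, hpu⟩ := hy
  obtain ⟨q, hq, hqm⟩ := hzy.exists_isPath
  refine ⟨huz, q ++ p.tail, hq.append hp, fun w hw => ?_⟩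
  rcases List.mem_append.1 hw with hw | hw
  · exact huz.trans (hqm w hw).1
  · exact hpu w (List.mem_of_mem_tail hw)

theorem InLoop.exists_isPath {x y : V} (hx : InLoop G T u x) (hy : InLoop G T u y) :
    ∃ p, G.IsPath p x y ∧ ∀ z ∈ p, InLoop G T u z := by
  obtain ⟨-, p, hp, hpu⟩ := hx
  obtain ⟨q, hq, hqm⟩ := hy.1.exists_isPath
  refine ⟨p ++ q.tail, hp.append hq, fun z hz => ?_⟩
  rcases List.mem_append.1 hz with hz | hz
  · exact inLoop_of_mem_isPath hp hpu hz
  · have hzq := hqm z (List.mem_of_mem_tail hz)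
    exact hy.of_anc hzq.1 hzq.2

end FlowGraph

open FlowGraph

theorem stmt6_general (G : FlowGraph V) (T : SpanningTree G) (u : V) :
    (∀ x y, InLoop G T u x → InLoop G T u y →
        ∃ p, G.IsPath p x y ∧ ∀ z ∈ p, Anc T u z) ∧
    (∀ x y, InLoop G T u x → InLoop G T u y →
        ∃ p, G.IsPath p x y ∧ ∀ z ∈ p, InLoop G T u z) ∧
    (∀ S : Set V, u ∈ S → (∀ x ∈ S, Anc T u x) →
        (∀ x ∈ S, ∀ y ∈ S, ∃ p, G.IsPath p x y ∧ ∀ z ∈ p, z ∈ S) →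
        ∀ x ∈ S, InLoop G T u x) := by
  refine ⟨fun x y hx hy => ?_, fun x y hx hy => hx.exists_isPath hy, ?_⟩
  · obtain ⟨p, hp, hpm⟩ := hx.exists_isPath hy
    exact ⟨p, hp, fun z hz => (hpm z hz).1⟩
  · intro S hu hanc hconn x hx
    obtain ⟨p, hp, hpS⟩ := hconn x hx u hu
    exact ⟨hanc x hx, p, hp, fun y hy => hanc y (hpS y hy)⟩

/-- Any two vertices of `loop(u)` are joined by paths through descendants of `u` (indeed
through `loop(u)` itself), so `loop(u)` induces a strongly connected subgraph, and it is
the unique maximal such set of descendants of `u` containing `u`. -/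
theorem stmt6 (G : FlowGraph V) (T : SpanningTree G)
    (hreach : ∀ v, G.Reach G.s v) (u : V) :
    (∀ x y, InLoop G T u x → InLoop G T u y →
        ∃ p, G.IsPath p x y ∧ ∀ z ∈ p, Anc T u z) ∧
    (∀ x y, InLoop G T u x → InLoop G T u y →
        ∃ p, G.IsPath p x y ∧ ∀ z ∈ p, InLoop G T u z) ∧
    (∀ S : Set V, u ∈ S → (∀ x ∈ S, Anc T u x) →
        (∀ x ∈ S, ∀ y ∈ S, ∃ p, G.IsPath p x y ∧ ∀ z ∈ p, z ∈ S) →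
        ∀ x ∈ S, InLoop G T u x) :=
  stmt6_general G T u
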